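/- arXiv:2207.03685 — 3 statements merged into one kernel-verified Lean document; each statement's English description precedes it below -/
import Mathlib

section
/- Let r ≥ 2 and let p, p' be integers with 1 ≤ p ≤ r − 1 and p < p'. Let μ ∈ P_r, w ∈ S_r, and let τ ∈ S_r be the transposition swapping 1 and p+1. Define E(α,u) = (pp'/2)‖α‖² − p'⟨α,δ⟩ + p⟨α, u•δ⟩ − ⟨δ, u•δ − δ⟩. Then for every x ∈ ℚ there is a bijection between {α ∈ μ + Q_r : E(α, w) = x} and {α ∈ (τ•μ) + Q_r : E(α, τ∘w) = x}. (This expresses the identity Γ^{r,p,p';μ}_{0,0}(w) = −Γ^{r,p,p';(1,p+1)μ}_{0,0}((1,p+1)w) at the level of exponents, the sign coming from sign(τ∘w) = −sign(w).) -/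
open Finset

noncomputable section

/-- Inner product `⟨u,v⟩ = Σ_i u i * v i` on `ℚ^r`. -/
def ip {r : ℕ} (u v : Fin r → ℚ) : ℚ := ∑ i, u i * v i

/-- Action of `S_r` permuting coordinates: `(w • v) i = v (w⁻¹ i)`. -/
def pact {r : ℕ} (w : Equiv.Perm (Fin r)) (v : Fin r → ℚ) : Fin r → ℚ := fun i => v (w⁻¹ i)

/-- The Weyl vector `δ`, whose (1-indexed) `i`-th coordinate is `(r+1-2i)/2`. -/
def weylδ (r : ℕ) : Fin r → ℚ := fun j => ((r : ℚ) - 1 - 2 * ((j : ℕ) : ℚ)) / 2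

/-- Membership in `V = {v : Fin r → ℚ | Σ_i v i = 0}`. -/
def memV {r : ℕ} (v : Fin r → ℚ) : Prop := ∑ i, v i = 0

/-- Membership in the root lattice `Q_r`. -/
def memQ {r : ℕ} (v : Fin r → ℚ) : Prop := memV v ∧ ∀ i, ∃ m : ℤ, v i = (m : ℚ)

/-- Membership in the weight lattice `P_r`. -/
def memP {r : ℕ} (v : Fin r → ℚ) : Prop := memV v ∧ ∀ i j, ∃ m : ℤ, v i - v j = (m : ℚ)

/-- The first fundamental weight `Λ₁ = ε₁ - (1/r)(ε₁ + ⋯ + ε_r)`. -/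
def Lam1 (r : ℕ) : Fin r → ℚ := fun j => (if (j : ℕ) = 0 then 1 else 0) - 1 / (r : ℚ)

/-- The simple roots, 0-indexed: `srootF i = ε_{i+1} - ε_{i+2}` in 1-indexed notation. -/
def srootF {r : ℕ} (i : Fin (r - 1)) : Fin r → ℚ :=
  fun j => (if (j : ℕ) = (i : ℕ) then 1 else 0) - (if (j : ℕ) = (i : ℕ) + 1 then 1 else 0)

/-- The highest root `θ = ε₁ - ε_r`. -/
def hroot (r : ℕ) : Fin r → ℚ :=
  fun j => (if (j : ℕ) = 0 then 1 else 0) - (if (j : ℕ) = r - 1 then 1 else 0)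

/-- The set `Π_{r,n}` of weights of `L_r(nΛ₁)`:
all `nΛ₁ - a₁α₁ - ⋯ - a_{r-1}α_{r-1}` with `n ≥ a₁ ≥ ⋯ ≥ a_{r-1} ≥ 0`. -/
def PiWts (r n : ℕ) : Set (Fin r → ℚ) :=
  {v | ∃ a : Fin (r - 1) → ℤ, (∀ i, 0 ≤ a i) ∧ (∀ i, a i ≤ (n : ℤ)) ∧
        (∀ i j, i ≤ j → a j ≤ a i) ∧
        v = (n : ℚ) • Lam1 r - ∑ i, (a i : ℚ) • srootF i}

/-- The exponent `E(α,w) = (pp'/2)‖α‖² - p'⟨α,δ⟩ + p⟨α,w•δ⟩ - ⟨δ, w•δ - δ⟩`. -/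
def Eexp (r p p' : ℕ) (α : Fin r → ℚ) (w : Equiv.Perm (Fin r)) : ℚ :=
  ((p : ℚ) * p' / 2) * ip α α - p' * ip α (weylδ r) + p * ip α (pact w (weylδ r))
    - ip (weylδ r) (pact w (weylδ r) - weylδ r)

/-!
Put `γ = ε₁ - ε_{p+1}` and `τ = (1, p+1)`, the reflection in `γ`. Since `⟨δ, γ⟩ = p`, we have
`τδ = δ - pγ`, so the map `α ↦ τα + γ` (the reflection in the affine hyperplane `⟨α, γ⟩ = 1`)
satisfies `p(τα + γ) - δ = τ(pα - δ)`. Now `2p E(α, w)` is a function of `pα - δ` and `wδ` that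
is invariant under permuting both simultaneously, hence `E(τα + γ, τw) = E(α, w)`. The map is an
involution carrying `μ + Q_r` onto `τμ + Q_r`, so it is the required bijection.
-/

section

variable {r : ℕ}

lemma ip_eq_dotProduct (u v : Fin r → ℚ) : ip u v = u ⬝ᵥ v := rfl

lemma ip_pact_pact (σ : Equiv.Perm (Fin r)) (u v : Fin r → ℚ) :
    ip (pact σ u) (pact σ v) = ip u v :=
  comp_equiv_dotProduct_comp_equiv ..

lemma pact_mul (σ τ : Equiv.Perm (Fin r)) (v : Fin r → ℚ) :
    pact (σ * τ) v = pact σ (pact τ v) := rfl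

lemma pact_add (σ : Equiv.Perm (Fin r)) (u v : Fin r → ℚ) :
    pact σ (u + v) = pact σ u + pact σ v := rfl

lemma pact_sub (σ : Equiv.Perm (Fin r)) (u v : Fin r → ℚ) :
    pact σ (u - v) = pact σ u - pact σ v := rfl

lemma pact_smul (σ : Equiv.Perm (Fin r)) (c : ℚ) (v : Fin r → ℚ) :
    pact σ (c • v) = c • pact σ v := rfl

lemma pact_swap_pact_swap (i j : Fin r) (v : Fin r → ℚ) :
    pact (Equiv.swap i j) (pact (Equiv.swap i j) v) = v := by
  rw [← pact_mul, Equiv.swap_mul_self]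
  rfl

def rootVec (i j : Fin r) : Fin r → ℚ := Pi.single i 1 - Pi.single j 1

lemma pact_swap (i j : Fin r) (v : Fin r → ℚ) :
    pact (Equiv.swap i j) v = v - (v i - v j) • rootVec i j := by
  funext k
  simp only [pact, Equiv.swap_inv, rootVec, Pi.sub_apply, Pi.smul_apply, smul_eq_mul,
    Pi.single_apply]
  rcases eq_or_ne k i with rfl | hki
  · rcases eq_or_ne k j with rfl | hkj <;> simp [*]
  rcases eq_or_ne k j with rfl | hkj
  · simp [hki]
  · simp [hki, hkj, Equiv.swap_apply_of_ne_of_ne]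

lemma pact_swap_rootVec (i j : Fin r) :
    pact (Equiv.swap i j) (rootVec i j) = -rootVec i j := by
  rw [pact_swap]
  rcases eq_or_ne i j with rfl | hij
  · simp [rootVec]
  · simp only [rootVec, Pi.sub_apply, Pi.single_eq_same, Pi.single_eq_of_ne hij,
      Pi.single_eq_of_ne hij.symm]
    module

lemma pact_swap_weylδ (i j : Fin r) :
    pact (Equiv.swap i j) (weylδ r) = weylδ r - (((j : ℕ) : ℚ) - i) • rootVec i j := by
  rw [pact_swap]
  congr 2
  simp only [weylδ]
  ring

lemma two_mul_Eexp (p p' : ℕ) (α : Fin r → ℚ) (w : Equiv.Perm (Fin r)) :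
    2 * p * Eexp r p p' α w =
      let v := (p : ℚ) • α - weylδ r
      p' * (ip v v - ip (weylδ r) (weylδ r))
        + 2 * p * (ip v (pact w (weylδ r)) + ip (weylδ r) (weylδ r)) := by
  simp only [Eexp, ip_eq_dotProduct, sub_dotProduct, dotProduct_sub, smul_dotProduct,
    dotProduct_smul, smul_eq_mul, dotProduct_comm (weylδ r) α]
  ring

lemma Eexp_mul_eq_of_smul_sub_weylδ {p : ℕ} (p' : ℕ) (hp : p ≠ 0) {α α' : Fin r → ℚ}
    {σ : Equiv.Perm (Fin r)} (hα : (p : ℚ) • α' - weylδ r = pact σ ((p : ℚ) • α - weylδ r))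
    (w : Equiv.Perm (Fin r)) :
    Eexp r p p' α' (σ * w) = Eexp r p p' α w := by
  have h2p : (2 * p : ℚ) ≠ 0 := by positivity
  apply mul_left_cancel₀ h2p
  rw [two_mul_Eexp, two_mul_Eexp]
  simp only [hα, pact_mul, ip_pact_pact]

def affineReflection (i j : Fin r) (α : Fin r → ℚ) : Fin r → ℚ :=
  pact (Equiv.swap i j) α + rootVec i j

lemma affineReflection_involutive (i j : Fin r) :
    Function.Involutive (affineReflection i j) := by
  intro α
  rw [affineReflection, affineReflection, pact_add, pact_swap_pact_swap, pact_swap_rootVec,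
    neg_add_cancel_right]

lemma smul_affineReflection_sub_weylδ (i j : Fin r) (α : Fin r → ℚ) :
    (((j : ℕ) : ℚ) - i) • affineReflection i j α - weylδ r
      = pact (Equiv.swap i j) ((((j : ℕ) : ℚ) - i) • α - weylδ r) := by
  rw [pact_sub, pact_swap_weylδ, pact_smul, affineReflection, smul_add]
  abel

lemma memQ_add {u v : Fin r → ℚ} (hu : memQ u) (hv : memQ v) : memQ (u + v) := by
  refine ⟨?_, fun i => ?_⟩
  · change ∑ i, (u i + v i) = 0
    rw [Finset.sum_add_distrib, hu.1, hv.1, add_zero]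
  obtain ⟨m, hm⟩ := hu.2 i
  obtain ⟨n, hn⟩ := hv.2 i
  exact ⟨m + n, by simp [hm, hn]⟩

lemma memQ_pact (σ : Equiv.Perm (Fin r)) {v : Fin r → ℚ} (hv : memQ v) : memQ (pact σ v) :=
  ⟨(Equiv.sum_comp σ⁻¹ v).trans hv.1, fun _ => hv.2 _⟩

lemma memQ_rootVec (i j : Fin r) : memQ (rootVec i j) := by
  refine ⟨by simp [memV, rootVec, Finset.sum_sub_distrib], fun k => ?_⟩
  exact ⟨(Pi.single i 1 - Pi.single j 1 : Fin r → ℤ) k, by simp [rootVec, Pi.single_apply]⟩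

lemma exists_memQ_affineReflection {μ α : Fin r → ℚ} (i j : Fin r)
    (h : ∃ β, memQ β ∧ α = μ + β) :
    ∃ β, memQ β ∧ affineReflection i j α = pact (Equiv.swap i j) μ + β := by
  obtain ⟨β, hβ, rfl⟩ := h
  exact ⟨pact (Equiv.swap i j) β + rootVec i j, memQ_add (memQ_pact _ hβ) (memQ_rootVec i j),
    by rw [affineReflection, pact_add, add_assoc]⟩

end

/-- with `τ = (1, p+1)`, for every `x ∈ ℚ` there is a bijection between
`{α ∈ μ + Q_r : E(α,w) = x}` and `{α ∈ τ•μ + Q_r : E(α, τ∘w) = x}`. -/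
theorem stmt2 (r p p' : ℕ) (hr : 2 ≤ r) (hp1 : 1 ≤ p) (hpr : p ≤ r - 1)
    (μ : Fin r → ℚ) (w : Equiv.Perm (Fin r)) (x : ℚ) :
    Nonempty
      ({α : Fin r → ℚ // (∃ β, memQ β ∧ α = μ + β) ∧ Eexp r p p' α w = x} ≃
        {α : Fin r → ℚ //
          (∃ β, memQ β ∧
            α = pact (Equiv.swap (⟨0, by omega⟩ : Fin r) (⟨p, by omega⟩ : Fin r)) μ + β) ∧
          Eexp r p p' α
            (Equiv.swap (⟨0, by omega⟩ : Fin r) (⟨p, by omega⟩ : Fin r) * w) = x}) := by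
  set i : Fin r := ⟨0, by omega⟩
  set j : Fin r := ⟨p, by omega⟩
  have hE : ∀ α, Eexp r p p' (affineReflection i j α) (Equiv.swap i j * w) = Eexp r p p' α w :=
    fun α => Eexp_mul_eq_of_smul_sub_weylδ p' (by omega) (by
      simpa [i, j] using smul_affineReflection_sub_weylδ i j α) w
  refine ⟨(affineReflection_involutive i j).toPerm.subtypeEquiv fun α => ?_⟩
  rw [Function.Involutive.coe_toPerm, hE]
  refine and_congr_left' ⟨exists_memQ_affineReflection i j, fun h => ?_⟩
  simpa only [affineReflection_involutive i j α, pact_swap_pact_swap] using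
    exists_memQ_affineReflection i j h
end
end

section
/- For every μ ∈ P_r there exist w ∈ S_r and λ ∈ Q_r such that rμ − δ + w•δ = rλ; equivalently, rμ − δ + w•δ ∈ rQ_r. -/
open Finset

noncomputable section

/-!
For `μ ∈ P_r` we have `rμ_0 = -Σ_i (μ_i - μ_0) ∈ ℤ`, so the coordinates of `rμ` are integers, all
congruent to one residue `c` modulo `r`. Since `δ_i - δ_j = j - i`, the `i`-th coordinate of `w•δ - δ` is
`i - w⁻¹(i)`. Taking for `w⁻¹` the cyclic rotation `i ↦ i + κ` of `Fin r` with `κ ≡ c`, every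
coordinate of `rμ - δ + w•δ` becomes divisible by `r`, while the coordinate sum stays `0`.
-/

theorem sum_pact {r : ℕ} (w : Equiv.Perm (Fin r)) (v : Fin r → ℚ) :
    ∑ i, pact w v i = ∑ i, v i :=
  Equiv.sum_comp w⁻¹ v

theorem pact_weylδ_sub_weylδ {r : ℕ} (w : Equiv.Perm (Fin r)) (i : Fin r) :
    pact w (weylδ r) i - weylδ r i = ((i : ℕ) : ℚ) - ((w⁻¹ i : ℕ) : ℚ) := by
  simp only [pact, weylδ]
  ring

theorem memV_smul_sub_add_pact {r : ℕ} {μ : Fin r → ℚ} (hμ : memV μ) (a : ℚ)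
    (w : Equiv.Perm (Fin r)) (v : Fin r → ℚ) : memV (a • μ - v + pact w v) := by
  simp only [memV, Pi.add_apply, Pi.sub_apply, Pi.smul_apply, smul_eq_mul, sum_add_distrib,
    sum_sub_distrib, ← mul_sum, sum_pact]
  rw [show ∑ i, μ i = 0 from hμ]
  ring

theorem memP.exists_int_mul_eq {r : ℕ} [NeZero r] {μ : Fin r → ℚ} (hμ : memP μ) :
    ∃ (c : ℤ) (m : Fin r → ℤ), ∀ i, (r : ℚ) * μ i = c + r * m i := by
  obtain ⟨hsum, hint⟩ := hμ
  choose m hm using fun i => hint i 0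
  have hμ0 : (r : ℚ) * μ 0 = -∑ i, (m i : ℚ) := by
    have : ∑ i, (μ 0 + (m i : ℚ)) = 0 := by
      rw [← hsum]
      exact sum_congr rfl fun i _ => by linarith [hm i]
    rw [sum_add_distrib, sum_const, card_univ, Fintype.card_fin, nsmul_eq_mul] at this
    linarith
  refine ⟨-∑ i, m i, m, fun i => ?_⟩
  push_cast
  linear_combination hμ0 + (r : ℚ) * hm i

theorem Fin.exists_val_intModEq (r : ℕ) [NeZero r] (c : ℤ) :
    ∃ κ : Fin r, (κ : ℤ) ≡ c [ZMOD r] := by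
  have hr : (0 : ℤ) < r := by exact_mod_cast Nat.pos_of_neZero r
  have hc := Int.emod_nonneg c hr.ne'
  refine ⟨⟨(c % r).toNat, by have := Int.emod_lt_of_pos c hr; omega⟩, ?_⟩
  simp only [Int.toNat_of_nonneg hc]
  exact Int.mod_modEq c r

theorem Fin.val_add_intModEq {r : ℕ} (a b : Fin r) :
    ((a + b : Fin r) : ℤ) ≡ a + b [ZMOD r] := by
  rw [Fin.val_add]
  push_cast
  exact Int.mod_modEq _ _

theorem exists_memQ_smul_eq {r : ℕ} {a : ℚ} (ha : a ≠ 0) {v : Fin r → ℚ} (hv : memV v)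
    (hint : ∀ i, ∃ m : ℤ, v i = a * m) : ∃ lam, memQ lam ∧ v = a • lam := by
  refine ⟨a⁻¹ • v, ⟨?_, fun i => ?_⟩, by rw [smul_inv_smul₀ ha]⟩
  · simp only [memV, Pi.smul_apply, smul_eq_mul, ← mul_sum]
    rw [show ∑ i, v i = 0 from hv, mul_zero]
  · obtain ⟨m, hm⟩ := hint i
    exact ⟨m, by simp [hm, ha]⟩

/-- For every `μ ∈ P_r` there exist `w ∈ S_r` and `λ ∈ Q_r` with
`rμ - δ + w•δ = rλ`, i.e. `rμ - δ + w•δ ∈ rQ_r`. -/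
theorem stmt5 (r : ℕ) (hr : 2 ≤ r) (μ : Fin r → ℚ) (hμ : memP μ) :
    ∃ (w : Equiv.Perm (Fin r)) (lam : Fin r → ℚ), memQ lam ∧
      (r : ℚ) • μ - weylδ r + pact w (weylδ r) = (r : ℚ) • lam := by
  have : NeZero r := ⟨by omega⟩
  obtain ⟨c, m, hm⟩ := hμ.exists_int_mul_eq
  obtain ⟨κ, hκ⟩ := Fin.exists_val_intModEq r c
  refine ⟨(Equiv.addRight κ)⁻¹, exists_memQ_smul_eq (NeZero.ne _)
    (memV_smul_sub_add_pact hμ.1 _ _ _) fun i => ?_⟩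
  obtain ⟨t, ht⟩ := ((Fin.val_add_intModEq i κ).trans (hκ.add_left _)).dvd
  have hδ := pact_weylδ_sub_weylδ (Equiv.addRight κ)⁻¹ i
  rw [inv_inv, Equiv.coe_addRight] at hδ
  have ht' := congrArg (Int.cast : ℤ → ℚ) ht
  push_cast at ht'
  refine ⟨m i + t, ?_⟩
  simp only [Pi.add_apply, Pi.sub_apply, Pi.smul_apply, smul_eq_mul]
  push_cast
  linear_combination hm i + hδ + ht'
end
end

section
/- For every n ∈ ℕ, ⋃_{j ∈ ℕ} Π_{r,n+jr} = nΛ_1 + Q_r, i.e. the union over j ≥ 0 of the sets Π_{r,n+jr} equals the coset {nΛ_1 + β : β ∈ Q_r} of the root lattice. In particular rΛ_1 ∈ Q_r, so nΛ_1 + Q_r = tΛ_1 + Q_r where t is the residue of n modulo r. -/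
open Finset

noncomputable section

/-! `Π_{r,N} ⊆ NΛ₁ + Q_r` because the simple roots lie in `Q_r`, and `NΛ₁ - nΛ₁ = j • rΛ₁ ∈ Q_r`
when `N = n + jr`. Conversely, every vector `Σ_p k_p ε_p - (N/r)(ε_1 + ⋯ + ε_r)` with
`k_p ≥ 0` and `Σ_p k_p = N` lies in `Π_{r,N}`, with coefficients `a_i = k_{i+1} + ⋯ + k_r`.
If `β ∈ Q_r` has coordinates `c_p` and `j ≥ Σ_p |c_p|`, then `nΛ₁ + β` is such a vector for
`k_p = n δ_{p1} + c_p + j` and `N = n + jr`. -/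

open scoped Pointwise

def rootLattice (r : ℕ) : AddSubgroup (Fin r → ℚ) where
  carrier := {v | memQ v}
  add_mem' {u v} hu hv := by
    obtain ⟨hu0, hu⟩ := hu
    obtain ⟨hv0, hv⟩ := hv
    refine ⟨?_, fun i => ?_⟩
    · rw [memV] at *
      simp only [Pi.add_apply, sum_add_distrib, hu0, hv0, add_zero]
    · obtain ⟨a, ha⟩ := hu i
      obtain ⟨b, hb⟩ := hv i
      exact ⟨a + b, by simp [ha, hb]⟩
  zero_mem' := ⟨by simp [memV], fun _ => ⟨0, by simp⟩⟩
  neg_mem' {v} hv := by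
    obtain ⟨hv0, hv⟩ := hv
    refine ⟨?_, fun i => ?_⟩
    · rw [memV] at *
      simp only [Pi.neg_apply, sum_neg_distrib, hv0, neg_zero]
    · obtain ⟨a, ha⟩ := hv i
      exact ⟨-a, by simp [ha]⟩

theorem mem_rootLattice {r : ℕ} {v : Fin r → ℚ} : v ∈ rootLattice r ↔ memQ v := Iff.rfl

theorem setOf_memQ_eq_vadd {r : ℕ} (x : Fin r → ℚ) :
    {v | ∃ β, memQ β ∧ v = x + β} = x +ᵥ (rootLattice r : Set (Fin r → ℚ)) := by
  ext v
  simp [Set.mem_vadd_set, mem_rootLattice, eq_comm]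

theorem sum_indicator_eq_one {r : ℕ} {c : ℕ} (hc : c < r) :
    ∑ j : Fin r, (if (j : ℕ) = c then (1 : ℚ) else 0) = 1 := by
  rw [Fin.sum_univ_eq_sum_range (fun j => if j = c then (1 : ℚ) else 0), sum_ite_eq']
  simp [hc]

theorem srootF_mem_rootLattice {r : ℕ} (i : Fin (r - 1)) : srootF i ∈ rootLattice r := by
  refine ⟨?_, fun j => ⟨(if (j : ℕ) = i then 1 else 0) - (if (j : ℕ) = i + 1 then 1 else 0), ?_⟩⟩
  · simp only [memV, srootF, sum_sub_distrib, sum_indicator_eq_one (show (i : ℕ) < r by omega),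
      sum_indicator_eq_one (show (i : ℕ) + 1 < r by omega), sub_self]
  · simp only [srootF]
    split_ifs <;> simp

theorem natCast_smul_Lam1_mem_rootLattice (r : ℕ) : (r : ℚ) • Lam1 r ∈ rootLattice r := by
  refine ⟨?_, fun j => ⟨if (j : ℕ) = 0 then (r : ℤ) - 1 else -1, ?_⟩⟩
  · rcases Nat.eq_zero_or_pos r with rfl | hr
    · simp [memV]
    have : (r : ℚ) ≠ 0 := by positivity
    simp only [memV, Pi.smul_apply, smul_eq_mul, Lam1, mul_sub, sum_sub_distrib, ← mul_sum,
      sum_indicator_eq_one hr, sum_const, card_univ, Fintype.card_fin, nsmul_eq_mul]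
    field_simp
    ring
  · have : (r : ℚ) ≠ 0 := by have := j.pos; positivity
    simp only [Pi.smul_apply, smul_eq_mul, Lam1]
    split_ifs <;> simp [field]

-- `b (i + 1)` is the coefficient of `α_{i+1}`; the conventions `b 0 = b r = 0` make the formula
-- uniform in `m`, including the two end coordinates.
theorem sum_smul_srootF_apply {r : ℕ} (b : ℕ → ℚ) (hb0 : b 0 = 0) (hbr : b r = 0) (m : Fin r) :
    (∑ i : Fin (r - 1), b (i + 1) • srootF i) m = b (m + 1) - b m := by
  obtain ⟨s, rfl⟩ : ∃ s, r = s + 1 := ⟨r - 1, by have := m.pos; omega⟩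
  have hshift : (∑ i ∈ range s, if (m : ℕ) = i + 1 then b (i + 1) else 0) = b m := by
    have h := sum_range_succ' (fun i => if (m : ℕ) = i then b i else 0) s
    simp only [sum_ite_eq, mem_range, m.isLt, if_true, hb0, ite_self, add_zero] at h
    exact h.symm
  have hlast : (if (m : ℕ) ∈ range s then b (m + 1) else 0) = b (m + 1) := by
    split_ifs with h
    · rfl
    · rw [show (m : ℕ) = s by simp at h; omega, hbr]
  simp only [Finset.sum_apply, Pi.smul_apply, srootF, smul_eq_mul, mul_sub, sum_sub_distrib,
    mul_ite, mul_one, mul_zero]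
  rw [Fin.sum_univ_eq_sum_range (fun i => if (m : ℕ) = i then b (i + 1) else 0),
    Fin.sum_univ_eq_sum_range (fun i => if (m : ℕ) = i + 1 then b (i + 1) else 0),
    add_tsub_cancel_right, sum_ite_eq, hshift, hlast]

theorem mem_PiWts_of_sum_eq {r N : ℕ} (k : ℕ → ℤ) (hk0 : ∀ p < r, 0 ≤ k p)
    (hk : ∑ p ∈ range r, k p = N) : (fun m : Fin r => (k m : ℚ) - N / r) ∈ PiWts r N := by
  set A : ℕ → ℤ := fun m => ∑ p ∈ Ico m r, k p
  have hA_nonneg (m : ℕ) : 0 ≤ A m := sum_nonneg fun p hp => hk0 p (mem_Ico.1 hp).2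
  have hA_anti : Antitone A := fun m m' h =>
    sum_le_sum_of_subset_of_nonneg (Ico_subset_Ico_left h) fun p hp _ => hk0 p (mem_Ico.1 hp).2
  have hA_zero : A 0 = N := by rw [← hk, range_eq_Ico]
  have hA_succ (m : ℕ) (hm : m < r) : A m = k m + A (m + 1) := sum_eq_sum_Ico_succ_bot hm k
  refine ⟨fun i => A (i + 1), fun i => hA_nonneg _, fun i => hA_zero ▸ hA_anti (Nat.zero_le _),
    fun i j hij => hA_anti (by simpa using hij), ?_⟩
  set b : ℕ → ℚ := fun m => if m = 0 then 0 else (A m : ℚ)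
  have hsum : ∑ i : Fin (r - 1), ((A (i + 1) : ℤ) : ℚ) • srootF i
      = ∑ i : Fin (r - 1), b (i + 1) • srootF i := by
    simp [b]
  funext m
  have hm := sum_smul_srootF_apply b (by simp [b]) (by simp [b, A]) m
  rw [hsum, Pi.sub_apply, hm]
  rcases eq_or_ne (m : ℕ) 0 with h0 | h0
  · have hA_one : A 1 = N - k 0 := by linarith [hA_succ 0 m.pos]
    simp [b, Lam1, h0, hA_one]
    ring
  · simp [b, Lam1, h0, hA_succ m m.isLt]
    ring

theorem PiWts_subset_vadd_rootLattice (r n j : ℕ) :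
    PiWts r (n + j * r) ⊆ (n : ℚ) • Lam1 r +ᵥ (rootLattice r : Set (Fin r → ℚ)) := by
  rintro v ⟨a, -, -, -, rfl⟩
  rw [mem_leftAddCoset_iff]
  have hv : -((n : ℚ) • Lam1 r) + (((n + j * r : ℕ) : ℚ) • Lam1 r - ∑ i, (a i : ℚ) • srootF i)
      = (j : ℚ) • ((r : ℚ) • Lam1 r) - ∑ i, (a i : ℚ) • srootF i := by
    push_cast
    module
  rw [SetLike.mem_coe, hv, Nat.cast_smul_eq_nsmul]
  simp only [Int.cast_smul_eq_zsmul]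
  exact sub_mem (nsmul_mem (natCast_smul_Lam1_mem_rootLattice r) _)
    (sum_mem fun i _ => zsmul_mem (srootF_mem_rootLattice i) _)

theorem exists_intCoords_of_mem_rootLattice {r : ℕ} {β : Fin r → ℚ} (hβ : β ∈ rootLattice r) :
    ∃ c : ℕ → ℤ, (∀ i : Fin r, β i = c i) ∧ ∑ p ∈ range r, c p = 0 := by
  obtain ⟨hβ0, hβZ⟩ := hβ
  choose c hc using hβZ
  refine ⟨fun p => if h : p < r then c ⟨p, h⟩ else 0, fun i => by simp [hc], ?_⟩
  rw [← Fin.sum_univ_eq_sum_range (fun p => if h : p < r then c ⟨p, h⟩ else 0)]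
  simp only [memV, hc] at hβ0
  simpa using (by exact_mod_cast hβ0 : ∑ i, c i = 0)

theorem exists_vadd_mem_PiWts {r : ℕ} (hr : 0 < r) (n : ℕ) {β : Fin r → ℚ}
    (hβ : β ∈ rootLattice r) : ∃ j : ℕ, (n : ℚ) • Lam1 r + β ∈ PiWts r (n + j * r) := by
  obtain ⟨c, hβc, hc⟩ := exists_intCoords_of_mem_rootLattice hβ
  set j := ∑ p ∈ range r, (c p).natAbs
  set k : ℕ → ℤ := fun p => (if p = 0 then (n : ℤ) else 0) + c p + j
  have hk0 (p : ℕ) (hp : p < r) : 0 ≤ k p := by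
    have : (c p).natAbs ≤ j :=
      single_le_sum (f := fun p => (c p).natAbs) (fun _ _ => Nat.zero_le _) (mem_range.2 hp)
    simp only [k]
    split_ifs <;> omega
  have hk : ∑ p ∈ range r, k p = ((n + j * r : ℕ) : ℤ) := by
    simp [k, sum_add_distrib, hc, hr]
    ring
  refine ⟨j, ?_⟩
  convert mem_PiWts_of_sum_eq k hk0 hk using 1
  funext m
  have : (r : ℚ) ≠ 0 := by positivity
  simp [k, Lam1, hβc]
  field_simp
  split_ifs <;> ring

/-- `⋃_{j ≥ 0} Π_{r,n+jr} = nΛ₁ + Q_r`; moreover `rΛ₁ ∈ Q_r`, so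
`nΛ₁ + Q_r = tΛ₁ + Q_r` where `t = n % r`. -/
theorem stmt16 (r : ℕ) (hr : 2 ≤ r) (n : ℕ) :
    ((⋃ j : ℕ, PiWts r (n + j * r)) = {v | ∃ β, memQ β ∧ v = (n : ℚ) • Lam1 r + β}) ∧
    memQ ((r : ℚ) • Lam1 r) ∧
    ({v : Fin r → ℚ | ∃ β, memQ β ∧ v = (n : ℚ) • Lam1 r + β}
      = {v | ∃ β, memQ β ∧ v = ((n % r : ℕ) : ℚ) • Lam1 r + β}) := by
  have hrΛ := natCast_smul_Lam1_mem_rootLattice r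
  simp only [setOf_memQ_eq_vadd]
  refine ⟨?_, hrΛ, ?_⟩
  · refine (Set.iUnion_subset fun j => PiWts_subset_vadd_rootLattice r n j).antisymm ?_
    rintro _ ⟨β, hβ, rfl⟩
    exact Set.mem_iUnion.2 (exists_vadd_mem_PiWts (by omega) n hβ)
  · have hn : (n : ℚ) = (n % r : ℕ) + (n / r : ℕ) * r := by
      exact_mod_cast (Nat.mod_add_div' n r).symm
    have hdiff : -((n : ℚ) • Lam1 r) + ((n % r : ℕ) : ℚ) • Lam1 r
        = -(((n / r : ℕ) : ℚ) • ((r : ℚ) • Lam1 r)) := by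
      rw [hn]
      module
    rw [leftAddCoset_eq_iff, hdiff, Nat.cast_smul_eq_nsmul]
    exact neg_mem (nsmul_mem hrΛ _)
end
end
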